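/- (Optimal uniform channel number.) Let γ > 0, let n ≥ 1 be an integer, define h(k) = k·log(1 + γ/k²) for positive integers k, and let r ∈ (0,1) be the global maximizer of g(x) = x·log(1 + 1/x²) over (0,∞). Define n_opt as follows: if ⌊r√γ⌋ ≥ n then n_opt = n; if 1 ≤ ⌊r√γ⌋ < n then n_opt ∈ {⌊r√γ⌋, ⌈r√γ⌉} is whichever gives the larger value of h; and if r√γ < 1 then n_opt = 1. Then for every integer k with 1 ≤ k ≤ n, h(k) ≤ h(n_opt) = n_opt · log(1 + γ/n_opt²). -/

import Mathlib

/-- Uniform-allocation objective `h k = k log (1 + γ/k²)`. -/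
noncomputable def hWF (γ : ℝ) (k : ℕ) : ℝ := (k : ℝ) * Real.log (1 + γ / (k : ℝ) ^ 2)

/-!
Since `h k = √γ · g (k / √γ)`, it suffices to show that `g` increases on `(0, r]` and decreases
on `[r, ∞)`. Fermat's rule gives `g' r = 0`. On `(0, 1]` the derivative
`g' x = log (1 + 1/x²) - 2/(1 + x²)` is strictly decreasing, since `g'' x = 2(x² - 1)/(x(1 + x²)²)`,
and on `[1, ∞)` it is negative because `log (1 + t) < t ≤ 2t/(1 + t)` for `t = 1/x² ∈ (0, 1]`.
Hence `r` is the only zero of `g'`, `g' > 0` on `(0, r)` and `g' < 0` on `(r, ∞)`. The integer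
maximizer of `h` on `[1, n]` is then `⌊r√γ⌋` or `⌈r√γ⌉`, clipped to `[1, n]`.
-/

open Real Set

noncomputable def gWF (x : ℝ) : ℝ := x * log (1 + 1 / x ^ 2)

noncomputable def gWFDeriv (x : ℝ) : ℝ := log (1 + 1 / x ^ 2) - 2 / (1 + x ^ 2)

theorem hasDerivAt_log_one_add_one_div_sq {x : ℝ} (hx : x ≠ 0) :
    HasDerivAt (fun y : ℝ => log (1 + 1 / y ^ 2)) (-2 / (x * (1 + x ^ 2))) x := by
  refine ((((hasDerivAt_const x (1 : ℝ)).fun_div (hasDerivAt_pow 2 x) (pow_ne_zero 2 hx)).const_add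
    1).log (by positivity)).congr_deriv ?_
  field_simp
  ring

theorem hasDerivAt_gWF {x : ℝ} (hx : 0 < x) : HasDerivAt gWF (gWFDeriv x) x := by
  refine ((hasDerivAt_id x).mul (hasDerivAt_log_one_add_one_div_sq hx.ne')).congr_deriv ?_
  rw [gWFDeriv, id, one_mul]
  field_simp
  ring

theorem hasDerivAt_gWFDeriv {x : ℝ} (hx : 0 < x) :
    HasDerivAt gWFDeriv (2 * (x ^ 2 - 1) / (x * (1 + x ^ 2) ^ 2)) x := by
  refine ((hasDerivAt_log_one_add_one_div_sq hx.ne').sub ((hasDerivAt_const x (2 : ℝ)).fun_div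
    ((hasDerivAt_pow 2 x).const_add 1) (by positivity))).congr_deriv ?_
  field_simp
  ring

theorem gWFDeriv_strictAntiOn : StrictAntiOn gWFDeriv (Ioc 0 1) := by
  refine strictAntiOn_of_deriv_neg (convex_Ioc 0 1)
    (fun x hx => (hasDerivAt_gWFDeriv hx.1).continuousAt.continuousWithinAt) ?_
  rw [interior_Ioc]
  intro x ⟨hx0, hx1⟩
  rw [(hasDerivAt_gWFDeriv hx0).deriv]
  have : x ^ 2 - 1 < 0 := by nlinarith
  exact div_neg_of_neg_of_pos (by linarith) (by positivity)

theorem gWFDeriv_neg_of_one_le {x : ℝ} (hx : 1 ≤ x) : gWFDeriv x < 0 := by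
  set t : ℝ := 1 / x ^ 2 with ht
  have ht0 : 0 < t := by positivity
  have ht1 : t ≤ 1 := by
    rw [ht, div_le_one (by positivity)]
    nlinarith
  have hlog : log (1 + t) < t := by
    linarith [log_lt_sub_one_of_pos (by linarith : 0 < 1 + t) (by linarith : 1 + t ≠ 1)]
  have hfrac : 2 / (1 + x ^ 2) = 2 * t / (1 + t) := by
    rw [ht]
    field_simp
    ring
  have ht2 : t ≤ 2 * t / (1 + t) := by
    rw [le_div_iff₀ (by linarith)]
    nlinarith
  rw [gWFDeriv, hfrac]
  linarith

section CriticalPoint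

variable {r : ℝ} (hr0 : gWFDeriv r = 0)
include hr0

theorem lt_one_of_gWFDeriv_eq_zero : r < 1 := by
  by_contra! h
  exact (gWFDeriv_neg_of_one_le h).ne hr0

theorem gWFDeriv_pos_of_lt {x : ℝ} (hx : 0 < x) (hxr : x < r) : 0 < gWFDeriv x := by
  have hr1 := lt_one_of_gWFDeriv_eq_zero hr0
  rw [← hr0]
  exact gWFDeriv_strictAntiOn ⟨hx, by linarith⟩ ⟨hx.trans hxr, hr1.le⟩ hxr

theorem gWFDeriv_neg_of_gt (hr : 0 < r) {x : ℝ} (hxr : r < x) : gWFDeriv x < 0 := by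
  rcases le_or_gt x 1 with hx1 | hx1
  · rw [← hr0]
    exact gWFDeriv_strictAntiOn ⟨hr, (lt_one_of_gWFDeriv_eq_zero hr0).le⟩ ⟨hr.trans hxr, hx1⟩ hxr
  · exact gWFDeriv_neg_of_one_le hx1.le

theorem gWF_monotoneOn : MonotoneOn gWF (Ioc 0 r) := by
  refine (strictMonoOn_of_deriv_pos (convex_Ioc 0 r)
    (fun x hx => (hasDerivAt_gWF hx.1).continuousAt.continuousWithinAt) ?_).monotoneOn
  rw [interior_Ioc]
  intro x ⟨hx0, hxr⟩
  rw [(hasDerivAt_gWF hx0).deriv]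
  exact gWFDeriv_pos_of_lt hr0 hx0 hxr

theorem gWF_antitoneOn (hr : 0 < r) : AntitoneOn gWF (Ici r) := by
  refine (strictAntiOn_of_deriv_neg (convex_Ici r)
    (fun x hx => (hasDerivAt_gWF (hr.trans_le hx)).continuousAt.continuousWithinAt) ?_).antitoneOn
  rw [interior_Ici]
  intro x hxr
  rw [(hasDerivAt_gWF (hr.trans hxr)).deriv]
  exact gWFDeriv_neg_of_gt hr0 hr hxr

end CriticalPoint

theorem hWF_eq_sqrt_mul_gWF {γ : ℝ} (hγ : 0 < γ) (k : ℕ) :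
    hWF γ k = √γ * gWF (k / √γ) := by
  rw [hWF, gWF, div_pow, one_div_div, sq_sqrt hγ.le, ← mul_assoc,
    mul_div_cancel₀ _ (sqrt_pos.2 hγ).ne']

section Integer

variable {γ r : ℝ} (hγ : 0 < γ) (hr0 : gWFDeriv r = 0)
include hγ hr0

theorem hWF_monotoneOn : MonotoneOn (hWF γ) {k : ℕ | 0 < k ∧ (k : ℝ) ≤ r * √γ} := by
  have hs := sqrt_pos.2 hγ
  intro a ⟨ha, har⟩ b ⟨_, hbr⟩ hab
  simp only [hWF_eq_sqrt_mul_gWF hγ]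
  refine mul_le_mul_of_nonneg_left (gWF_monotoneOn hr0 ⟨by positivity, ?_⟩ ⟨by positivity, ?_⟩
    (by gcongr)) hs.le
  all_goals rw [div_le_iff₀ hs]; assumption

theorem hWF_antitoneOn (hr : 0 < r) : AntitoneOn (hWF γ) {k : ℕ | r * √γ ≤ k} := by
  have hs := sqrt_pos.2 hγ
  intro a (har : r * √γ ≤ a) b (hbr : r * √γ ≤ b) hab
  simp only [hWF_eq_sqrt_mul_gWF hγ]
  refine mul_le_mul_of_nonneg_left (gWF_antitoneOn hr0 hr ?_ ?_ (by gcongr)) hs.le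
  all_goals rw [mem_Ici, le_div_iff₀ hs]; assumption

end Integer

theorem stmt_15_general (γ : ℝ) (hγ : 0 < γ) (n : ℕ)
    (r : ℝ) (hr : r ∈ Set.Ioo (0 : ℝ) 1)
    (hrmax : ∀ x : ℝ, 0 < x →
      x * Real.log (1 + 1 / x ^ 2) ≤ r * Real.log (1 + 1 / r ^ 2))
    (nopt : ℕ)
    (hcase1 : n ≤ ⌊r * Real.sqrt γ⌋₊ → nopt = n)
    (hcase2 : 1 ≤ ⌊r * Real.sqrt γ⌋₊ → ⌊r * Real.sqrt γ⌋₊ < n →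
      (nopt = ⌊r * Real.sqrt γ⌋₊ ∨ nopt = ⌈r * Real.sqrt γ⌉₊) ∧
      hWF γ nopt = max (hWF γ ⌊r * Real.sqrt γ⌋₊) (hWF γ ⌈r * Real.sqrt γ⌉₊))
    (hcase3 : r * Real.sqrt γ < 1 → nopt = 1) :
    ∀ k : ℕ, 1 ≤ k → k ≤ n →
      hWF γ k ≤ hWF γ nopt ∧
      hWF γ nopt = (nopt : ℝ) * Real.log (1 + γ / (nopt : ℝ) ^ 2) := by
  intro k hk hkn
  refine ⟨?_, rfl⟩
  have hr0 : gWFDeriv r = 0 :=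
    IsLocalMax.hasDerivAt_eq_zero (Filter.mem_of_superset (Ioi_mem_nhds hr.1) hrmax)
      (hasDerivAt_gWF hr.1)
  have hmono := hWF_monotoneOn hγ hr0
  have hanti := hWF_antitoneOn hγ hr0 hr.1
  set x := r * √γ
  have hx : 0 < x := mul_pos hr.1 (sqrt_pos.2 hγ)
  have hfloor : (⌊x⌋₊ : ℝ) ≤ x := Nat.floor_le hx.le
  rcases le_or_gt n ⌊x⌋₊ with hn | hn
  · rw [hcase1 hn]
    exact hmono ⟨hk, le_trans (by exact_mod_cast hkn.trans hn) hfloor⟩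
      ⟨hk.trans hkn, le_trans (by exact_mod_cast hn) hfloor⟩ hkn
  rcases Nat.eq_zero_or_pos ⌊x⌋₊ with h0 | hpos
  · have hx1 : x < 1 := Nat.floor_eq_zero.1 h0
    rw [hcase3 hx1]
    exact hanti (show x ≤ ((1 : ℕ) : ℝ) by simpa using hx1.le)
      (show x ≤ (k : ℝ) by linarith [(Nat.one_le_cast.2 hk : (1 : ℝ) ≤ k)]) hk
  rw [(hcase2 hpos hn).2]
  rcases le_or_gt k ⌊x⌋₊ with hkx | hkx
  · exact (hmono ⟨hk, le_trans (by exact_mod_cast hkx) hfloor⟩ ⟨hpos, hfloor⟩ hkx).trans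
      (le_max_left _ _)
  · exact (hanti (Nat.le_ceil x) (show x ≤ (k : ℝ) from (Nat.lt_floor_add_one x).le.trans
      (by exact_mod_cast hkx)) ((Nat.ceil_le_floor_add_one x).trans hkx)).trans (le_max_right _ _)

/-- Optimal uniform channel number.  With `r ∈ (0,1)` the global
maximizer of `g x = x log (1 + 1/x²)` on `(0,∞)` and `n_opt` defined by cases
(`n_opt = n` if `⌊r√γ⌋ ≥ n`; `n_opt ∈ {⌊r√γ⌋, ⌈r√γ⌉}` maximizing `h` if
`1 ≤ ⌊r√γ⌋ < n`; `n_opt = 1` if `r√γ < 1`), one has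
`h k ≤ h n_opt = n_opt log (1 + γ/n_opt²)` for all `1 ≤ k ≤ n`. -/
theorem stmt_15 (γ : ℝ) (hγ : 0 < γ) (n : ℕ) (hn : 1 ≤ n)
    (r : ℝ) (hr : r ∈ Set.Ioo (0 : ℝ) 1)
    (hrmax : ∀ x : ℝ, 0 < x →
      x * Real.log (1 + 1 / x ^ 2) ≤ r * Real.log (1 + 1 / r ^ 2))
    (nopt : ℕ)
    (hcase1 : n ≤ ⌊r * Real.sqrt γ⌋₊ → nopt = n)
    (hcase2 : 1 ≤ ⌊r * Real.sqrt γ⌋₊ → ⌊r * Real.sqrt γ⌋₊ < n →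
      (nopt = ⌊r * Real.sqrt γ⌋₊ ∨ nopt = ⌈r * Real.sqrt γ⌉₊) ∧
      hWF γ nopt = max (hWF γ ⌊r * Real.sqrt γ⌋₊) (hWF γ ⌈r * Real.sqrt γ⌉₊))
    (hcase3 : r * Real.sqrt γ < 1 → nopt = 1) :
    ∀ k : ℕ, 1 ≤ k → k ≤ n →
      hWF γ k ≤ hWF γ nopt ∧
      hWF γ nopt = (nopt : ℝ) * Real.log (1 + γ / (nopt : ℝ) ^ 2) :=
  stmt_15_general γ hγ n r hr hrmax nopt hcase1 hcase2 hcase3
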